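/- Let V : ℝ^d → ℝ be bounded Lipschitz, μ ∈ P₁(ℝ^d), θ > 0, and let (μ_n) be a sequence in P₁(ℝ^d) with W₁(μ_n, μ) → 0. Let m(ρ) = inf{∫ V dν : ν ∈ P₁(ℝ^d), W₁(ν, ρ) ≤ θ}. Then m(μ_n) → m(μ) as n → ∞. -/

import Mathlib

open MeasureTheory Metric Set Filter Topology ENNReal NNReal

/-- The 1-Wasserstein distance between two measures on a metric measurable
space, defined as the infimum of the transport cost over all couplings. -/
noncomputable def W1 {X : Type*} [MeasurableSpace X] [PseudoMetricSpace X]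
    (μ ν : Measure X) : ℝ≥0∞ :=
  ⨅ (π : Measure (X × X)) (_ : π.map Prod.fst = μ) (_ : π.map Prod.snd = ν),
    ∫⁻ p, ENNReal.ofReal (dist p.1 p.2) ∂π

/-- The distributionally robust value: the infimum of `∫ V dν` over probability
measures `ν` on `ℝ^d` with finite first moment lying in the closed
1-Wasserstein ball of radius `r` around `μ`. -/
noncomputable def robustVal (d : ℕ) (V : EuclideanSpace ℝ (Fin d) → ℝ)
    (μ : Measure (EuclideanSpace ℝ (Fin d))) (r : ℝ) : ℝ :=
  sInf {s | ∃ ν : Measure (EuclideanSpace ℝ (Fin d)), IsProbabilityMeasure ν ∧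
    Integrable (fun x => ‖x‖) ν ∧ W1 ν μ ≤ ENNReal.ofReal r ∧ s = ∫ x, V x ∂ν}

/-! The value `m` is `2C/θ`-Lipschitz in the center for `W₁`. If `ν` is admissible for `ρ` and
`W₁(ρ, ρ') ≤ ε`, then `W₁(ν, ρ') ≤ θ + ε` by the triangle inequality (gluing of couplings), so the
mixture `θ/(θ+ε) • ν + ε/(θ+ε) • ρ'` is admissible for `ρ'`; since `|V| ≤ C`, its value exceeds
`∫ V dν` by at most `2C · ε/(θ+ε) ≤ 2Cε/θ`. -/

open ProbabilityTheory

theorem MeasureTheory.Measure.exists_gluing {α β γ : Type*} [MeasurableSpace α]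
    [MeasurableSpace β] [MeasurableSpace γ] [StandardBorelSpace α] [Nonempty α]
    [StandardBorelSpace γ] [Nonempty γ]
    (π₁ : Measure (α × β)) (π₂ : Measure (β × γ)) [IsFiniteMeasure π₁] [IsFiniteMeasure π₂]
    (h : π₁.snd = π₂.fst) :
    ∃ τ : Measure (α × β × γ), τ.map (fun p => (p.1, p.2.1)) = π₁ ∧ τ.map Prod.snd = π₂ := by
  -- Disintegrate both couplings over the common marginal and couple the two conditional laws
  -- independently.
  set κ := (π₁.map Prod.swap).condKernel
  have hκ : π₂.fst ⊗ₘ κ = π₁.map Prod.swap := by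
    rw [← h, ← Measure.fst_map_swap]
    exact Measure.disintegrate _ _
  have hη : π₂.fst ⊗ₘ π₂.condKernel = π₂ := π₂.disintegrate _
  have hm : Measurable fun p : β × α × γ => (p.2.1, p.1, p.2.2) := by fun_prop
  refine ⟨(π₂.fst ⊗ₘ (κ ×ₖ π₂.condKernel)).map fun p => (p.2.1, p.1, p.2.2), ?_, ?_⟩
  · rw [Measure.map_map (by fun_prop) hm]
    change Measure.map (Prod.swap ∘ Prod.map id Prod.fst) _ = _
    rw [← Measure.map_map measurable_swap (by fun_prop), ← Measure.compProd_map measurable_fst,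
      ← Kernel.fst_eq, Kernel.fst_prod, hκ, Measure.map_map measurable_swap measurable_swap]
    simp
  · rw [Measure.map_map measurable_snd hm]
    change Measure.map (Prod.map id Prod.snd) _ = _
    rw [← Measure.compProd_map measurable_snd, ← Kernel.snd_eq, Kernel.snd_prod, hη]

section Wasserstein

variable {X : Type*} [MeasurableSpace X]

theorem map_fst_map_diag (μ : Measure X) : (μ.map fun x => (x, x)).map Prod.fst = μ := by
  rw [Measure.map_map measurable_fst (by fun_prop)]
  exact Measure.map_id

theorem map_snd_map_diag (μ : Measure X) : (μ.map fun x => (x, x)).map Prod.snd = μ := by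
  rw [Measure.map_map measurable_snd (by fun_prop)]
  exact Measure.map_id

variable [PseudoMetricSpace X]

theorem W1_le_lintegral {μ ν : Measure X} {π : Measure (X × X)}
    (h₁ : π.map Prod.fst = μ) (h₂ : π.map Prod.snd = ν) :
    W1 μ ν ≤ ∫⁻ p, ENNReal.ofReal (dist p.1 p.2) ∂π :=
  iInf₂_le_of_le π h₁ (iInf_le _ h₂)

theorem lintegral_dist_map_diag (μ : Measure X) :
    ∫⁻ p, ENNReal.ofReal (dist p.1 p.2) ∂(μ.map fun x => (x, x)) = 0 :=
  le_antisymm ((lintegral_map_le _ _).trans_eq (by simp)) zero_le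

theorem W1_self (μ : Measure X) : W1 μ μ = 0 :=
  le_antisymm ((W1_le_lintegral (map_fst_map_diag μ) (map_snd_map_diag μ)).trans_eq
    (lintegral_dist_map_diag μ)) zero_le

theorem W1_comm (μ ν : Measure X) : W1 μ ν = W1 ν μ := by
  suffices h : ∀ μ ν : Measure X, W1 ν μ ≤ W1 μ ν from le_antisymm (h ν μ) (h μ ν)
  intro μ ν
  refine le_iInf₂ fun π h₁ => le_iInf fun h₂ => ?_
  refine (W1_le_lintegral (π := π.map Prod.swap) ?_ ?_).trans_eq ?_
  · rwa [Measure.map_map measurable_fst measurable_swap]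
  · rwa [Measure.map_map measurable_snd measurable_swap]
  · rw [show (Prod.swap : X × X → X × X) = MeasurableEquiv.prodComm from rfl,
      lintegral_map_equiv]
    exact lintegral_congr fun p => by rw [dist_comm]; rfl

theorem W1_smul_add_smul_le (ν ρ : Measure X) {a b : ℝ≥0∞} (hab : a + b = 1) :
    W1 (a • ν + b • ρ) ρ ≤ a * W1 ν ρ := by
  rcases eq_or_ne a 0 with rfl | ha₀
  · simp_all [W1_self]
  have ha : a ≠ ∞ := ne_top_of_le_ne_top one_ne_top (hab ▸ le_self_add)
  simp only [W1, ENNReal.mul_iInf_of_ne ha₀ ha]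
  refine le_iInf₂ fun π h₁ => le_iInf fun h₂ => ?_
  set δ := ρ.map fun x => (x, x)
  refine (W1_le_lintegral (π := a • π + b • δ) ?_ ?_).trans ?_
  · rw [Measure.map_add _ _ measurable_fst, Measure.map_smul, Measure.map_smul, h₁,
      map_fst_map_diag]
  · rw [Measure.map_add _ _ measurable_snd, Measure.map_smul, Measure.map_smul, h₂,
      map_snd_map_diag, ← add_smul, hab, one_smul]
  · rw [lintegral_add_measure, lintegral_smul_measure, lintegral_smul_measure,
      lintegral_dist_map_diag, smul_zero, add_zero, smul_eq_mul]

variable [OpensMeasurableSpace X] [SecondCountableTopology X] [StandardBorelSpace X]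
  [Nonempty X]

theorem W1_triangle (μ ρ ν : Measure X) [IsFiniteMeasure ρ] :
    W1 μ ν ≤ W1 μ ρ + W1 ρ ν := by
  conv_rhs => simp only [W1, ENNReal.iInf_add, ENNReal.add_iInf]
  refine le_iInf₂ fun π₂ h₂ => le_iInf fun h₂' => le_iInf₂ fun π₁ h₁ => le_iInf fun h₁' => ?_
  have : IsFiniteMeasure (π₁.map Prod.snd) := h₁' ▸ inferInstance
  have : IsFiniteMeasure π₁ := Measure.isFiniteMeasure_of_map measurable_snd.aemeasurable
  have : IsFiniteMeasure (π₂.map Prod.fst) := h₂ ▸ inferInstance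
  have : IsFiniteMeasure π₂ := Measure.isFiniteMeasure_of_map measurable_fst.aemeasurable
  obtain ⟨τ, hτ₁, hτ₂⟩ :=
    Measure.exists_gluing π₁ π₂ (h₁'.trans h₂.symm)
  have hd : Measurable fun p : X × X => ENNReal.ofReal (dist p.1 p.2) := by fun_prop
  have hm₁ : Measurable fun p : X × X × X => (p.1, p.2.1) := by fun_prop
  have hm₂ : Measurable fun p : X × X × X => (p.1, p.2.2) := by fun_prop
  refine (W1_le_lintegral (π := τ.map fun p => (p.1, p.2.2)) ?_ ?_).trans ?_
  · rw [Measure.map_map measurable_fst hm₂, ← h₁, ← hτ₁, Measure.map_map measurable_fst hm₁]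
    rfl
  · rw [Measure.map_map measurable_snd hm₂, ← h₂', ← hτ₂, Measure.map_map measurable_snd
      measurable_snd]
    rfl
  calc ∫⁻ p, ENNReal.ofReal (dist p.1 p.2) ∂(τ.map fun p => (p.1, p.2.2))
      = ∫⁻ p, ENNReal.ofReal (dist p.1 p.2.2) ∂τ := lintegral_map hd hm₂
    _ ≤ ∫⁻ p, ENNReal.ofReal (dist p.1 p.2.1) + ENNReal.ofReal (dist p.2.1 p.2.2) ∂τ := by
        gcongr with p
        rw [← ENNReal.ofReal_add dist_nonneg dist_nonneg]
        exact ENNReal.ofReal_le_ofReal (dist_triangle _ _ _)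
    _ = ∫⁻ p, ENNReal.ofReal (dist p.1 p.2) ∂π₁ + ∫⁻ p, ENNReal.ofReal (dist p.1 p.2) ∂π₂ := by
        rw [lintegral_add_left (f := fun p : X × X × X => ENNReal.ofReal (dist p.1 p.2.1))
          (by fun_prop), ← hτ₁, ← hτ₂, lintegral_map hd hm₁,
          lintegral_map hd measurable_snd]

end Wasserstein

theorem abs_integral_le_of_forall_abs_le {α : Type*} [MeasurableSpace α] {f : α → ℝ} {C : ℝ}
    (h : ∀ x, |f x| ≤ C) (μ : Measure α) [IsProbabilityMeasure μ] : |∫ x, f x ∂μ| ≤ C := by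
  simpa using norm_integral_le_of_norm_le_const (μ := μ) (f := f) (.of_forall h)

section RobustValue

variable {d : ℕ} {V : EuclideanSpace ℝ (Fin d) → ℝ} {C : ℝ}

local notation "E" => EuclideanSpace ℝ (Fin d)

theorem robustVal_le_integral (hbd : ∀ x, |V x| ≤ C) {ρ ν : Measure E} {θ : ℝ}
    [IsProbabilityMeasure ν] (hν₁ : Integrable (fun x => ‖x‖) ν)
    (hνρ : W1 ν ρ ≤ ENNReal.ofReal θ) :
    robustVal d V ρ θ ≤ ∫ x, V x ∂ν := by
  refine csInf_le ⟨-C, ?_⟩ ⟨ν, inferInstance, hν₁, hνρ, rfl⟩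
  rintro _ ⟨ν, hν, -, -, rfl⟩
  exact neg_le_of_abs_le (abs_integral_le_of_forall_abs_le hbd ν)

theorem le_robustVal {ρ : Measure E} [IsProbabilityMeasure ρ]
    (hρ₁ : Integrable (fun x => ‖x‖) ρ) {θ c : ℝ}
    (h : ∀ ν : Measure E, IsProbabilityMeasure ν → Integrable (fun x => ‖x‖) ν →
      W1 ν ρ ≤ ENNReal.ofReal θ → c ≤ ∫ x, V x ∂ν) :
    c ≤ robustVal d V ρ θ := by
  refine le_csInf ⟨_, ρ, inferInstance, hρ₁, by simp [W1_self], rfl⟩ ?_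
  rintro _ ⟨ν, hν, hν₁, hνρ, rfl⟩
  exact h ν hν hν₁ hνρ

theorem robustVal_le_add_of_W1_le (hV : Measurable V) (hbd : ∀ x, |V x| ≤ C) {θ ε : ℝ}
    (hθ : 0 < θ) (hε : 0 ≤ ε) {ρ ρ' : Measure E} [IsProbabilityMeasure ρ]
    (hρ₁ : Integrable (fun x => ‖x‖) ρ) [IsProbabilityMeasure ρ']
    (hρ'₁ : Integrable (fun x => ‖x‖) ρ') (hW : W1 ρ ρ' ≤ ENNReal.ofReal ε) :
    robustVal d V ρ' θ ≤ robustVal d V ρ θ + 2 * C * ε / θ := by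
  rw [← sub_le_iff_le_add]
  refine le_robustVal hρ₁ fun ν hν hν₁ hνρ => ?_
  set a := θ / (θ + ε)
  set b := ε / (θ + ε)
  have ha : 0 ≤ a := by positivity
  have hb : 0 ≤ b := by positivity
  have hab : ENNReal.ofReal a + ENNReal.ofReal b = 1 := by
    rw [← ENNReal.ofReal_add ha hb, ← add_div, div_self (by positivity), ENNReal.ofReal_one]
  set ν' := ENNReal.ofReal a • ν + ENNReal.ofReal b • ρ'
  have : IsProbabilityMeasure ν' := ⟨by simp [ν', hab]⟩
  have hν'₁ : Integrable (fun x => ‖x‖) ν' :=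
    (hν₁.smul_measure ofReal_ne_top).add_measure (hρ'₁.smul_measure ofReal_ne_top)
  have hν'ρ' : W1 ν' ρ' ≤ ENNReal.ofReal θ :=
    calc W1 ν' ρ' ≤ ENNReal.ofReal a * W1 ν ρ' := W1_smul_add_smul_le ν ρ' hab
      _ ≤ ENNReal.ofReal a * (ENNReal.ofReal θ + ENNReal.ofReal ε) :=
          by gcongr; exact (W1_triangle ν ρ ρ').trans (add_le_add hνρ hW)
      _ = ENNReal.ofReal θ := by
          rw [← ENNReal.ofReal_add hθ.le hε, ← ENNReal.ofReal_mul ha,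
            div_mul_cancel₀ _ (by positivity)]
  have hIV : ∀ μ : Measure E, IsFiniteMeasure μ → Integrable V μ := fun μ _ =>
    (integrable_const C).mono' hV.aestronglyMeasurable (.of_forall hbd)
  have hν'V : ∫ x, V x ∂ν' = a * ∫ x, V x ∂ν + b * ∫ x, V x ∂ρ' := by
    rw [integral_add_measure ((hIV ν inferInstance).smul_measure ofReal_ne_top)
      ((hIV ρ' inferInstance).smul_measure ofReal_ne_top), integral_smul_measure,
      integral_smul_measure, toReal_ofReal ha, toReal_ofReal hb, smul_eq_mul, smul_eq_mul]
  have hgap : ∫ x, V x ∂ρ' - ∫ x, V x ∂ν ≤ 2 * C := by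
    linarith [abs_le.1 (abs_integral_le_of_forall_abs_le hbd ν),
      abs_le.1 (abs_integral_le_of_forall_abs_le hbd ρ')]
  have hC : 0 ≤ C := (abs_nonneg _).trans (hbd 0)
  have hbθ : b ≤ ε / θ := div_le_div_of_nonneg_left hε hθ (by linarith)
  have hab' : a = 1 - b := by rw [eq_sub_iff_add_eq, ← add_div, div_self (by positivity)]
  calc robustVal d V ρ' θ - 2 * C * ε / θ ≤ ∫ x, V x ∂ν' - 2 * C * ε / θ := by
        gcongr; exact robustVal_le_integral hbd hν'₁ hν'ρ'
    _ = ∫ x, V x ∂ν + (b * (∫ x, V x ∂ρ' - ∫ x, V x ∂ν) - 2 * C * (ε / θ)) := by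
        rw [hν'V, hab']; ring
    _ ≤ ∫ x, V x ∂ν := by
        have := mul_le_mul_of_nonneg_left hgap hb
        have := mul_le_mul_of_nonneg_right hbθ (by linarith : 0 ≤ 2 * C)
        linarith

theorem abs_robustVal_sub_le_of_W1_le (hV : Measurable V) (hbd : ∀ x, |V x| ≤ C) {θ ε : ℝ}
    (hθ : 0 < θ) (hε : 0 ≤ ε) {ρ ρ' : Measure E} [IsProbabilityMeasure ρ]
    (hρ₁ : Integrable (fun x => ‖x‖) ρ) [IsProbabilityMeasure ρ']
    (hρ'₁ : Integrable (fun x => ‖x‖) ρ') (hW : W1 ρ ρ' ≤ ENNReal.ofReal ε) :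
    |robustVal d V ρ θ - robustVal d V ρ' θ| ≤ 2 * C * ε / θ := by
  have h₁ := robustVal_le_add_of_W1_le hV hbd hθ hε hρ₁ hρ'₁ hW
  have h₂ := robustVal_le_add_of_W1_le hV hbd hθ hε hρ'₁ hρ₁ (W1_comm ρ ρ' ▸ hW)
  exact abs_sub_le_iff.2 ⟨by linarith, by linarith⟩

end RobustValue

/-- Stability of the robust value under perturbation of the center: if
`W₁(μₙ, μ) → 0` then `m(μₙ) → m(μ)` where
`m(ρ) = inf {∫ V dν : W₁(ν, ρ) ≤ θ}`. -/
theorem robustVal_center_stability (d : ℕ)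
    (V : EuclideanSpace ℝ (Fin d) → ℝ) (K : ℝ≥0) (hLip : LipschitzWith K V)
    (C : ℝ) (hbd : ∀ x, |V x| ≤ C) (θ : ℝ) (hθ : 0 < θ)
    (μ : Measure (EuclideanSpace ℝ (Fin d))) (hμ : IsProbabilityMeasure μ)
    (hμ1 : Integrable (fun x => ‖x‖) μ)
    (μn : ℕ → Measure (EuclideanSpace ℝ (Fin d)))
    (hμn : ∀ n, IsProbabilityMeasure (μn n))
    (hμn1 : ∀ n, Integrable (fun x => ‖x‖) (μn n))
    (hconv : Tendsto (fun n => W1 (μn n) μ) atTop (nhds 0)) :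
    Tendsto (fun n => robustVal d V (μn n) θ) atTop
      (nhds (robustVal d V μ θ)) := by
  have hV : Measurable V := hLip.continuous.measurable
  have hbound : ∀ᶠ n in atTop, dist (robustVal d V (μn n) θ) (robustVal d V μ θ) ≤
      2 * C * (W1 (μn n) μ).toReal / θ := by
    filter_upwards [hconv.eventually_ne zero_ne_top] with n hn
    exact abs_robustVal_sub_le_of_W1_le hV hbd hθ toReal_nonneg (hμn1 n) hμ1
      (ofReal_toReal hn).ge
  have hlim : Tendsto (fun n => 2 * C * (W1 (μn n) μ).toReal / θ) atTop (𝓝 0) := by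
    simpa using (((tendsto_toReal zero_ne_top).comp hconv).const_mul (2 * C)).div_const θ
  exact tendsto_iff_dist_tendsto_zero.2
    (squeeze_zero' (.of_forall fun _ => dist_nonneg) hbound hlim)
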